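/- Let (L, (h_1, …, h_m)) be a backward self-similar system such that L_x is connected for every infinite word x ∈ {1, …, m}^ℕ. Let M_1, …, M_r be mutually disjoint nonempty compact subsets of L with L = ⋃_{i=1}^r M_i. Then there exists l_0 ∈ ℕ such that for every x ∈ {1, …, m}^ℕ and every l ≥ l_0 there exists i ∈ {1, …, r} with h_{x|l}⁻¹(L) ⊆ M_i. -/
import Mathlib


open Set

/-- `h_w⁻¹(L)` for a finite word `w = (w₁, …, w_k)`, encoded as the list `[w₁, …, w_k]`,
namely `h_{w₁}⁻¹(h_{w₂}⁻¹(⋯ h_{w_k}⁻¹(L) ⋯))`. -/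
def bwdPre {X : Type*} {m : ℕ} (h : Fin m → X → X) (L : Set X) : List (Fin m) → Set X
  | [] => L
  | a :: w => h a ⁻¹' bwdPre h L w

/-- The truncation `x|k` of an infinite word `x`. -/
def wordTrunc {m : ℕ} (x : ℕ → Fin m) (k : ℕ) : List (Fin m) :=
  List.ofFn fun i : Fin k => x i.val

/-- `L_x = ⋂_{j ≥ 1} h_{x|j}⁻¹(L)`. -/
def bwdLimSet {X : Type*} {m : ℕ} (h : Fin m → X → X) (L : Set X) (x : ℕ → Fin m) : Set X :=
  ⋂ j : ℕ, bwdPre h L (wordTrunc x (j + 1))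

lemma bwdPre_mono {X : Type*} {m : ℕ} (h : Fin m → X → X) {A B : Set X} (hAB : A ⊆ B) :
    ∀ w, bwdPre h A w ⊆ bwdPre h B w
  | [] => hAB
  | _ :: w => Set.preimage_mono (bwdPre_mono h hAB w)

lemma bwdPre_append {X : Type*} {m : ℕ} (h : Fin m → X → X) (L : Set X) (v w : List (Fin m)) :
    bwdPre h L (v ++ w) = bwdPre h (bwdPre h L w) v := by
  induction v with
  | nil => rfl
  | cons a v ih => simp only [List.cons_append, bwdPre, List.append_eq, ih]

lemma bwdPre_subset {X : Type*} {m : ℕ} (h : Fin m → X → X) (L : Set X)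
    (hinv : L = ⋃ j, h j ⁻¹' L) : ∀ w, bwdPre h L w ⊆ L
  | [] => subset_rfl
  | a :: w => fun y hy => by
      have : h a y ∈ L := bwdPre_subset h L hinv w hy
      rw [hinv]; exact mem_iUnion.2 ⟨a, this⟩

lemma bwdPre_nonempty {X : Type*} {m : ℕ} (h : Fin m → X → X) (L : Set X)
    (hLne : L.Nonempty) (hinv : L = ⋃ j, h j ⁻¹' L)
    (hfib : ∀ z ∈ L, ∀ j, (h j ⁻¹' ({z} : Set X)).Nonempty) :
    ∀ w, (bwdPre h L w).Nonempty
  | [] => hLne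
  | a :: w => by
      obtain ⟨z, hz⟩ := bwdPre_nonempty h L hLne hinv hfib w
      obtain ⟨y, hy⟩ := hfib z (bwdPre_subset h L hinv w hz) a
      exact ⟨y, show h a y ∈ bwdPre h L w by
        simp only [mem_preimage, mem_singleton_iff] at hy; rw [hy]; exact hz⟩

lemma bwdPre_closed {X : Type*} [TopologicalSpace X] {m : ℕ} (h : Fin m → X → X)
    (hcont : ∀ j, Continuous (h j)) (L : Set X) (hLcl : IsClosed L) :
    ∀ w, IsClosed (bwdPre h L w)
  | [] => hLcl
  | a :: w => (bwdPre_closed h hcont L hLcl w).preimage (hcont a)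

lemma wordTrunc_succ {m : ℕ} (x : ℕ → Fin m) (l : ℕ) :
    wordTrunc x (l + 1) = wordTrunc x l ++ [x l] := by
  rw [wordTrunc, List.ofFn_succ', List.concat_eq_append]; rfl

lemma bwdPre_trunc_antitone {X : Type*} {m : ℕ} (h : Fin m → X → X) (L : Set X)
    (hinv : L = ⋃ j, h j ⁻¹' L) (x : ℕ → Fin m) :
    Antitone fun l => bwdPre h L (wordTrunc x l) := by
  refine antitone_nat_of_succ_le fun l => ?_
  rw [wordTrunc_succ, bwdPre_append]
  exact bwdPre_mono h (bwdPre_subset h L hinv [x l]) _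

/-- For a backward self-similar system with all `L_x` connected: if `L` is partitioned
into finitely many mutually disjoint nonempty compact sets `M₁, …, M_r`, then there is
`l₀` such that for every infinite word `x` and every `l ≥ l₀`, the set `h_{x|l}⁻¹(L)` is
contained in some `M_i`. -/
theorem backward_word_preimage_eventually_in_piece
    {X : Type*} [MetricSpace X] {m : ℕ} (hm : 1 ≤ m)
    (h : Fin m → X → X) (hcont : ∀ j, Continuous (h j))
    (L : Set X) (hLne : L.Nonempty) (hLcp : IsCompact L)
    (hinv : L = ⋃ j, h j ⁻¹' L)
    (hfib : ∀ z ∈ L, ∀ j, (h j ⁻¹' ({z} : Set X)).Nonempty)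
    (hconn : ∀ x : ℕ → Fin m, IsConnected (bwdLimSet h L x))
    {r : ℕ} (M : Fin r → Set X)
    (hMne : ∀ i, (M i).Nonempty) (hMcp : ∀ i, IsCompact (M i))
    (hMdisj : ∀ i j, i ≠ j → M i ∩ M j = ∅)
    (hMcover : L = ⋃ i, M i) :
    ∃ l₀ : ℕ, ∀ x : ℕ → Fin m, ∀ l ≥ l₀, ∃ i : Fin r,
      bwdPre h L (wordTrunc x l) ⊆ M i := by
  classical
  have hanti : ∀ x : ℕ → Fin m, Antitone fun l => bwdPre h L (wordTrunc x l) :=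
    fun x => bwdPre_trunc_antitone h L hinv x
  -- pointwise result
  have key : ∀ x : ℕ → Fin m, ∃ l : ℕ, ∃ i : Fin r, bwdPre h L (wordTrunc x l) ⊆ M i := by
    intro x
    obtain ⟨⟨z, hz⟩, hpre⟩ := hconn x
    have hsubL : bwdLimSet h L x ⊆ L := fun y hy =>
      bwdPre_subset h L hinv _ (mem_iInter.1 hy 0)
    obtain ⟨i, hzi⟩ : ∃ i, z ∈ M i := by
      have := hsubL hz; rw [hMcover] at this; exact mem_iUnion.1 this
    set T : Set X := ⋃ j ∈ ({i}ᶜ : Set (Fin r)), M j with hT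
    have hTcp : IsCompact T := (Set.toFinite _).isCompact_biUnion fun j _ => hMcp j
    have hdisj : Disjoint (M i) T := by
      rw [Set.disjoint_left]
      rintro y hyi hyT
      obtain ⟨j, hj, hyj⟩ := mem_iUnion₂.1 hyT
      have : y ∈ M i ∩ M j := ⟨hyi, hyj⟩
      rw [hMdisj i j (fun e => hj (by simp [e.symm]))] at this
      exact this
    obtain ⟨u, v, hu, hv, hMu, hTv, huv⟩ :=
      SeparatedNhds.of_isCompact_isCompact (hMcp i) hTcp hdisj
    have hLuv : L ⊆ u ∪ v := by
      intro y hy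
      rw [hMcover] at hy
      obtain ⟨j, hyj⟩ := mem_iUnion.1 hy
      by_cases hji : j = i
      · exact Or.inl (hMu (hji ▸ hyj))
      · exact Or.inr (hTv (mem_iUnion₂.2 ⟨j, by simp [hji], hyj⟩))
    have hxu : bwdLimSet h L x ⊆ u :=
      hpre.subset_left_of_subset_union hu hv huv (hsubL.trans hLuv) ⟨z, hz, hMu hzi⟩
    -- Cantor intersection to find a level inside u
    have hKcp : ∀ l, IsCompact (bwdPre h L (wordTrunc x l)) := fun l =>
      hLcp.of_isClosed_subset (bwdPre_closed h hcont L hLcp.isClosed _)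
        (bwdPre_subset h L hinv _)
    by_cases hall : ∀ j : ℕ, (bwdPre h L (wordTrunc x (j + 1)) ∩ uᶜ).Nonempty
    · exfalso
      have hdir : Directed (· ⊇ ·) (fun j : ℕ => bwdPre h L (wordTrunc x (j + 1)) ∩ uᶜ) := by
        intro a b
        refine ⟨max a b, inter_subset_inter_left _ ?_, inter_subset_inter_left _ ?_⟩
        · exact hanti x (by omega)
        · exact hanti x (by omega)
      have := IsCompact.nonempty_iInter_of_directed_nonempty_isCompact_isClosed
        (fun j : ℕ => bwdPre h L (wordTrunc x (j + 1)) ∩ uᶜ) hdir hall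
        (fun j => (hKcp _).inter_right hu.isClosed_compl)
        (fun j => (bwdPre_closed h hcont L hLcp.isClosed _).inter hu.isClosed_compl)
      obtain ⟨y, hy⟩ := this
      have hy1 : y ∈ bwdLimSet h L x := mem_iInter.2 fun j => (mem_iInter.1 hy j).1
      exact (mem_iInter.1 hy 0).2 (hxu hy1)
    · push_neg at hall
      obtain ⟨j, hj⟩ := hall
      rw [← Set.disjoint_iff_inter_eq_empty,
        Set.disjoint_compl_right_iff_subset] at hj
      refine ⟨j + 1, i, fun y hy => ?_⟩
      have hyL : y ∈ L := bwdPre_subset h L hinv _ hy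
      rw [hMcover] at hyL
      obtain ⟨j', hyj'⟩ := mem_iUnion.1 hyL
      by_cases hji : j' = i
      · exact hji ▸ hyj'
      · exact absurd (hTv (mem_iUnion₂.2 ⟨j', by simp [hji], hyj'⟩))
          (Set.disjoint_left.1 huv (hj hy))
  -- uniformization via compactness of the word space
  by_contra hcon
  push_neg at hcon
  set Bad : ℕ → Set (ℕ → Fin m) :=
    fun l => {x | ∀ i, ¬ bwdPre h L (wordTrunc x l) ⊆ M i} with hBad
  have hBadmono : ∀ {l l' : ℕ}, l ≤ l' → Bad l' ⊆ Bad l := by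
    intro l l' hll x hx i hsub
    exact hx i ((hanti x hll).trans hsub)
  have hBadne : ∀ l, (Bad l).Nonempty := by
    intro l
    obtain ⟨x, l', hl', hfail⟩ := hcon l
    exact ⟨x, hBadmono hl' hfail⟩
  have hBadcl : ∀ l, IsClosed (Bad l) := by
    intro l
    have : Bad l = (fun (x : ℕ → Fin m) (i : Fin l) => x i.val) ⁻¹'
        {g : Fin l → Fin m | ∀ i, ¬ bwdPre h L (List.ofFn g) ⊆ M i} := rfl
    rw [this]
    exact (isClosed_discrete _).preimage (continuous_pi fun i => continuous_apply i.val)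
  have hdir : Directed (· ⊇ ·) Bad := fun a b =>
    ⟨max a b, hBadmono (le_max_left a b), hBadmono (le_max_right a b)⟩
  obtain ⟨x, hx⟩ := IsCompact.nonempty_iInter_of_directed_nonempty_isCompact_isClosed
    Bad hdir hBadne (fun l => (hBadcl l).isCompact) hBadcl
  obtain ⟨l, i, hli⟩ := key x
  exact mem_iInter.1 hx l i hli
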